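/- arXiv:2411.02761 — 2 statements merged into one kernel-verified Lean document; each statement's English description precedes it below -/
import Mathlib

section
/- Let A = [[-4, -3], [0, 1]] and v = (0, 1) ∈ ℝ². Then the normalized vectors exp(s*A) v / ‖exp(s*A) v‖ converge, as s → +∞, to the unit vector (1/√34) * (-3, 5). -/
/-!
`A` is upper triangular with eigenvalues `-4` and `1`; diagonalizing it gives
`exp(sA) v = (eˢ / 5) • ((-3, 5) + e⁻⁵ˢ • (3, 0))`, so up to a positive factor the orbit
converges to the eigenvector `(-3, 5)` of the dominant eigenvalue `1`. Normalization ignores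
positive factors and is continuous away from `0`.
-/

open Matrix Filter

/-- The vector `exp(sA) v` in Euclidean `ℝ²`, for `A = [[-4,-3],[0,1]]` and `v = (0,1)`. -/
noncomputable def expAv (s : ℝ) : EuclideanSpace ℝ (Fin 2) :=
  (EuclideanSpace.equiv (Fin 2) ℝ).symm
    ((NormedSpace.exp (s • (!![-4, -3; 0, 1] : Matrix (Fin 2) (Fin 2) ℝ))).mulVec ![0, 1])

open NormedSpace Topology

section Normalize

variable {V : Type*} [NormedAddCommGroup V] [NormedSpace ℝ V]

theorem NormedSpace.continuousAt_normalize {x : V} (hx : x ≠ 0) : ContinuousAt normalize x :=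
  (continuousAt_id.norm.inv₀ (norm_ne_zero_iff.mpr hx)).smul continuousAt_id

theorem NormedSpace.tendsto_normalize_smul {α : Type*} {l : Filter α} {c : α → ℝ} {u : α → V}
    {w : V} (hc : ∀ᶠ a in l, 0 < c a) (hu : Tendsto u l (𝓝 w)) (hw : w ≠ 0) :
    Tendsto (fun a => normalize (c a • u a)) l (𝓝 (normalize w)) := by
  refine ((continuousAt_normalize hw).tendsto.comp hu).congr' ?_
  filter_upwards [hc] with a ha using (normalize_smul_of_pos ha (u a)).symm

end Normalize

theorem Matrix.exp_smul_upperTriangular_fin_two {a d : ℝ} (b s : ℝ) (had : a ≠ d) :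
    exp (s • !![a, b; 0, d]) =
      !![Real.exp (a * s), b * (Real.exp (d * s) - Real.exp (a * s)) / (d - a); 0, Real.exp (d * s)] := by
  have hda : d - a ≠ 0 := sub_ne_zero.mpr had.symm
  -- the columns of `P` are eigenvectors for `a` and `d`
  set P : Matrix (Fin 2) (Fin 2) ℝ := !![1, b; 0, d - a]
  set Q : Matrix (Fin 2) (Fin 2) ℝ := !![1, -b / (d - a); 0, 1 / (d - a)]
  have hPQ : P * Q = 1 := by
    ext i j
    fin_cases i <;> fin_cases j <;> simp [P, Q] <;> field_simp <;> ring
  have hinv : P⁻¹ = Q := inv_eq_right_inv hPQ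
  have hP : IsUnit P := (isUnit_iff_isUnit_det P).mpr (isUnit_det_of_right_inverse hPQ)
  have hconj : s • !![a, b; 0, d] = P * diagonal ![a * s, d * s] * P⁻¹ := by
    rw [hinv, diagonal_vec2]
    ext i j
    fin_cases i <;> fin_cases j <;> simp [P, Q] <;> field_simp <;> ring
  have hdiag : exp (diagonal ![a * s, d * s]) = diagonal ![Real.exp (a * s), Real.exp (d * s)] := by
    rw [exp_diagonal]
    congr 1
    ext i
    fin_cases i <;> simp [← Real.exp_eq_exp_ℝ]
  rw [hconj, exp_conj _ _ hP, hdiag, hinv, diagonal_vec2]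
  ext i j
  fin_cases i <;> fin_cases j <;> simp [P, Q] <;> field_simp <;> ring

theorem expAv_eq (s : ℝ) :
    expAv s = (Real.exp s / 5) • (!₂[-3, 5] + Real.exp (-5 * s) • !₂[3, 0]) := by
  rw [expAv, exp_smul_upperTriangular_fin_two _ _ (by norm_num : (-4 : ℝ) ≠ 1),
    show (-4 : ℝ) * s = s + -5 * s by ring, Real.exp_add]
  ext i
  fin_cases i <;> simp <;> ring

theorem norm_toLp_neg_three_five : ‖!₂[(-3 : ℝ), 5]‖ = √34 := by
  rw [EuclideanSpace.norm_eq, Fin.sum_univ_two]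
  norm_num

theorem stmt3 :
    Tendsto (fun s : ℝ => ‖expAv s‖⁻¹ • expAv s) atTop
      (nhds ((Real.sqrt 34)⁻¹ •
        (EuclideanSpace.equiv (Fin 2) ℝ).symm ![(-3 : ℝ), 5])) := by
  have hdecay : Tendsto (fun s : ℝ => Real.exp (-5 * s)) atTop (𝓝 0) :=
    Real.tendsto_exp_atBot.comp (tendsto_id.const_mul_atTop_of_neg (by norm_num))
  have hlim : Tendsto (fun s : ℝ => !₂[(-3 : ℝ), 5] + Real.exp (-5 * s) • !₂[3, 0]) atTop
      (𝓝 !₂[-3, 5]) := by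
    simpa using tendsto_const_nhds.add (hdecay.smul_const !₂[(3 : ℝ), 0])
  have hne : !₂[(-3 : ℝ), 5] ≠ 0 := by
    rw [← norm_ne_zero_iff, norm_toLp_neg_three_five]
    positivity
  have hpos : ∀ᶠ s : ℝ in atTop, 0 < Real.exp s / 5 := .of_forall fun s => by positivity
  have key := tendsto_normalize_smul hpos hlim hne
  rw [NormedSpace.normalize, norm_toLp_neg_three_five] at key
  rw [funext expAv_eq]
  exact key
end

section
/- There exists a constant C > 0 such that for every s* ≥ 1 and every s ∈ [0, s*], the integral ∫_0^s e^(-σ) * (e^(-σ) + e^(σ - s*))^(-4) dσ is at most C * e^(3 s*/2). -/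
open Real intervalIntegral

lemma int_exp_mul (c a b : ℝ) (hc : c ≠ 0) :
    ∫ x in a..b, Real.exp (c * x) = (Real.exp (c * b) - Real.exp (c * a)) / c := by
  have h := intervalIntegral.integral_comp_mul_left (a := a) (b := b) (fun x => Real.exp x) hc
  rw [h, integral_exp, smul_eq_mul]
  field_simp

theorem stmt8 :
    ∃ C > (0 : ℝ), ∀ sstar : ℝ, 1 ≤ sstar → ∀ s ∈ Set.Icc (0 : ℝ) sstar,
      (∫ σ in (0 : ℝ)..s, Real.exp (-σ) * ((Real.exp (-σ) + Real.exp (σ - sstar)) ^ 4)⁻¹)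
        ≤ C * Real.exp (3 * sstar / 2) := by
  refine ⟨1, one_pos, fun sstar hs s hsmem => ?_⟩
  obtain ⟨hs0, hss⟩ := hsmem
  set f : ℝ → ℝ := fun σ => Real.exp (-σ) * ((Real.exp (-σ) + Real.exp (σ - sstar)) ^ 4)⁻¹ with hf
  have hpos : ∀ σ : ℝ, 0 < Real.exp (-σ) + Real.exp (σ - sstar) := fun σ => by positivity
  have hcont : Continuous f := by
    apply Continuous.mul (by fun_prop)
    apply Continuous.inv₀ (by fun_prop)
    intro x; positivity
  have hint : ∀ a b : ℝ, IntervalIntegrable f MeasureTheory.volume a b :=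
    fun a b => hcont.intervalIntegrable a b
  have hfnonneg : ∀ σ, 0 ≤ f σ := fun σ => by
    have := hpos σ; positivity
  -- bound 1 : f σ ≤ exp (3σ)
  have hb1 : ∀ σ : ℝ, f σ ≤ Real.exp (3 * σ) := by
    intro σ
    have h1 : (Real.exp (-σ)) ^ 4 ≤ (Real.exp (-σ) + Real.exp (σ - sstar)) ^ 4 := by
      apply pow_le_pow_left₀ (Real.exp_nonneg _)
      linarith [Real.exp_pos (σ - sstar)]
    have h2 : ((Real.exp (-σ) + Real.exp (σ - sstar)) ^ 4)⁻¹ ≤ ((Real.exp (-σ)) ^ 4)⁻¹ := by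
      apply inv_anti₀ (by positivity) h1
    calc f σ ≤ Real.exp (-σ) * ((Real.exp (-σ)) ^ 4)⁻¹ := by
          apply mul_le_mul_of_nonneg_left h2 (Real.exp_nonneg _)
      _ = Real.exp (3 * σ) := by
          rw [← Real.exp_nat_mul, ← Real.exp_neg, ← Real.exp_add]
          ring_nf
  -- bound 2 : f σ ≤ exp (4 sstar - 5 σ)
  have hb2 : ∀ σ : ℝ, f σ ≤ Real.exp (4 * sstar - 5 * σ) := by
    intro σ
    have h1 : (Real.exp (σ - sstar)) ^ 4 ≤ (Real.exp (-σ) + Real.exp (σ - sstar)) ^ 4 := by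
      apply pow_le_pow_left₀ (Real.exp_nonneg _)
      linarith [Real.exp_pos (-σ)]
    have h2 : ((Real.exp (-σ) + Real.exp (σ - sstar)) ^ 4)⁻¹ ≤ ((Real.exp (σ - sstar)) ^ 4)⁻¹ :=
      inv_anti₀ (by positivity) h1
    calc f σ ≤ Real.exp (-σ) * ((Real.exp (σ - sstar)) ^ 4)⁻¹ := by
          apply mul_le_mul_of_nonneg_left h2 (Real.exp_nonneg _)
      _ = Real.exp (4 * sstar - 5 * σ) := by
          rw [← Real.exp_nat_mul, ← Real.exp_neg, ← Real.exp_add]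
          ring_nf
  -- extend to ∫_0^sstar
  have hext : (∫ σ in (0:ℝ)..s, f σ) ≤ ∫ σ in (0:ℝ)..sstar, f σ := by
    have hadd : (∫ σ in (0:ℝ)..s, f σ) + (∫ σ in s..sstar, f σ) = ∫ σ in (0:ℝ)..sstar, f σ :=
      intervalIntegral.integral_add_adjacent_intervals (hint 0 s) (hint s sstar)
    have h2 : 0 ≤ ∫ σ in s..sstar, f σ :=
      intervalIntegral.integral_nonneg hss (fun x _ => hfnonneg x)
    linarith
  have hhalf : (0:ℝ) ≤ sstar / 2 := by linarith
  have hsplit : (∫ σ in (0:ℝ)..sstar, f σ)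
      = (∫ σ in (0:ℝ)..(sstar/2), f σ) + ∫ σ in (sstar/2)..sstar, f σ :=
    (intervalIntegral.integral_add_adjacent_intervals (hint 0 (sstar/2)) (hint (sstar/2) sstar)).symm
  have hie1 : IntervalIntegrable (fun σ => Real.exp (3 * σ)) MeasureTheory.volume 0 (sstar/2) :=
    (by fun_prop : Continuous fun σ : ℝ => Real.exp (3 * σ)).intervalIntegrable _ _
  have hie2 : IntervalIntegrable (fun σ => Real.exp (4 * sstar - 5 * σ)) MeasureTheory.volume (sstar/2) sstar :=
    (by fun_prop : Continuous fun σ : ℝ => Real.exp (4 * sstar - 5 * σ)).intervalIntegrable _ _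
  have hI1 : (∫ σ in (0:ℝ)..(sstar/2), f σ) ≤ Real.exp (3 * sstar / 2) / 3 := by
    calc (∫ σ in (0:ℝ)..(sstar/2), f σ) ≤ ∫ σ in (0:ℝ)..(sstar/2), Real.exp (3 * σ) :=
          intervalIntegral.integral_mono_on hhalf (hint _ _) hie1 (fun x _ => hb1 x)
      _ = (Real.exp (3 * (sstar/2)) - Real.exp (3 * 0)) / 3 := int_exp_mul 3 0 (sstar/2) (by norm_num)
      _ ≤ Real.exp (3 * sstar / 2) / 3 := by
          rw [show 3 * (sstar/2) = 3 * sstar / 2 by ring]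
          have := Real.exp_pos (0:ℝ)
          nlinarith [Real.exp_pos (3 * sstar / 2)]
  have hI2 : (∫ σ in (sstar/2)..sstar, f σ) ≤ Real.exp (3 * sstar / 2) / 5 := by
    have key : (∫ σ in (sstar/2)..sstar, Real.exp (4 * sstar - 5 * σ))
        = (Real.exp (4 * sstar - 5 * sstar) - Real.exp (4 * sstar - 5 * (sstar/2))) / (-5) := by
      have h := int_exp_mul (-5) (sstar/2) sstar (by norm_num)
      calc (∫ σ in (sstar/2)..sstar, Real.exp (4 * sstar - 5 * σ))
          = ∫ σ in (sstar/2)..sstar, Real.exp (4 * sstar) * Real.exp ((-5) * σ) := by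
            congr 1; ext σ; rw [← Real.exp_add]; ring_nf
        _ = Real.exp (4 * sstar) * ∫ σ in (sstar/2)..sstar, Real.exp ((-5) * σ) :=
            intervalIntegral.integral_const_mul _ _
        _ = (Real.exp (4 * sstar - 5 * sstar) - Real.exp (4 * sstar - 5 * (sstar/2))) / (-5) := by
            rw [h, show 4 * sstar - 5 * sstar = 4 * sstar + (-5) * sstar by ring,
              show 4 * sstar - 5 * (sstar/2) = 4 * sstar + (-5) * (sstar/2) by ring,
              Real.exp_add, Real.exp_add]
            ring
    calc (∫ σ in (sstar/2)..sstar, f σ) ≤ ∫ σ in (sstar/2)..sstar, Real.exp (4 * sstar - 5 * σ) :=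
          intervalIntegral.integral_mono_on (by linarith) (hint _ _) hie2 (fun x _ => hb2 x)
      _ = (Real.exp (4 * sstar - 5 * sstar) - Real.exp (4 * sstar - 5 * (sstar/2))) / (-5) := key
      _ ≤ Real.exp (3 * sstar / 2) / 5 := by
          rw [show 4 * sstar - 5 * (sstar/2) = 3 * sstar / 2 by ring]
          have := Real.exp_pos (4 * sstar - 5 * sstar)
          nlinarith [Real.exp_pos (3 * sstar / 2)]
  have := Real.exp_pos (3 * sstar / 2)
  calc (∫ σ in (0:ℝ)..s, f σ) ≤ ∫ σ in (0:ℝ)..sstar, f σ := hext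
    _ = _ := hsplit
    _ ≤ Real.exp (3 * sstar / 2) / 3 + Real.exp (3 * sstar / 2) / 5 := add_le_add hI1 hI2
    _ ≤ 1 * Real.exp (3 * sstar / 2) := by linarith
end
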